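/- Let Φ be a reduced crystallographic root system and α a positive root. Then ℓ(s_α) = ⟨α^∨, 2ρ⟩ − 1 holds if and only if every positive root β ≠ α with s_α(β) ∈ Φ⁻ satisfies ⟨α^∨, β⟩ = 1. -/
import Mathlib


open Classical

/-- A reduced crystallographic root system with a chosen positive system,
inside a `ℚ`-vector space `V`.  `pairing α β` is `⟨α^∨, β⟩`. -/
structure RootSystemData (V : Type*) [AddCommGroup V] [Module ℚ V] where
  Φ : Set V
  finite : Φ.Finite
  pairing : V → Module.Dual ℚ V
  zero_not_mem : (0 : V) ∉ Φ
  neg_mem : ∀ α ∈ Φ, -α ∈ Φ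
  pairing_self : ∀ α ∈ Φ, pairing α α = 2
  pairing_int : ∀ α ∈ Φ, ∀ β ∈ Φ, ∃ n : ℤ, pairing α β = (n : ℚ)
  reflect_mem : ∀ α ∈ Φ, ∀ β ∈ Φ, β - pairing α β • α ∈ Φ
  reduced : ∀ α ∈ Φ, ∀ c : ℚ, c • α ∈ Φ → c = 1 ∨ c = -1
  pos : Set V
  pos_sub : pos ⊆ Φ
  mem_pos_or_neg : ∀ α ∈ Φ, α ∈ pos ∨ -α ∈ pos
  not_pos_and_neg : ∀ α ∈ pos, -α ∉ pos
  pos_add : ∀ α ∈ pos, ∀ β ∈ pos, α + β ∈ Φ → α + β ∈ pos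

namespace RootSystemData

variable {V : Type*} [AddCommGroup V] [Module ℚ V] (R : RootSystemData V)

/-- The reflection `s_α` as a linear endomorphism of `V`. -/
noncomputable def refl (α : V) : Module.End ℚ V := 1 - (R.pairing α).smulRight α

/-- Indicator function `Φ⁺` of the positive roots. -/
noncomputable def ind (β : V) : ℤ := if β ∈ R.pos then 1 else 0

/-- `2ρ`, the sum of the positive roots. -/
noncomputable def twoRho : V := ∑ᶠ α ∈ R.pos, α

/-- The length of a (Weyl group) element: the number of positive roots sent to
negative roots. -/
noncomputable def len (f : Module.End ℚ V) : ℕ := {α | α ∈ R.pos ∧ f α ∉ R.pos}.ncard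

/-- `f` belongs to the Weyl group, i.e. is a product of reflections. -/
def IsWeyl (f : Module.End ℚ V) : Prop :=
  f ∈ Submonoid.closure {g : Module.End ℚ V | ∃ α ∈ R.pos, g = R.refl α}

/-- A quantum root: `ℓ(s_α) = ⟨α^∨, 2ρ⟩ - 1`. -/
def IsQuantumRoot (α : V) : Prop :=
  α ∈ R.pos ∧ (R.len (R.refl α) : ℚ) = R.pairing α R.twoRho - 1

/-- Edges of the quantum Bruhat graph `QB(W)`, together with their weights:
a Bruhat edge `w → w s_α` of weight `0` when `ℓ(w s_α) = ℓ(w) + 1`, and a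
quantum edge of weight `α^∨` when `ℓ(w s_α) = ℓ(w) + 1 - ⟨α^∨, 2ρ⟩`. -/
def Edge (u v : Module.End ℚ V) (ω : Module.Dual ℚ V) : Prop :=
  ∃ α ∈ R.pos, v = u * R.refl α ∧
    ((R.len v = R.len u + 1 ∧ ω = 0) ∨
     ((R.len v : ℚ) = (R.len u : ℚ) + 1 - R.pairing α R.twoRho ∧ ω = R.pairing α))

/-- Paths in the quantum Bruhat graph; `Path R u v ω n` means there is a path
from `u` to `v` with `n` edges and total weight `ω`. -/
inductive Path (R : RootSystemData V) :
    Module.End ℚ V → Module.End ℚ V → Module.Dual ℚ V → ℕ → Prop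
  | nil (u : Module.End ℚ V) : Path R u u 0 0
  | cons {u v w : Module.End ℚ V} {ω' ω : Module.Dual ℚ V} {n : ℕ} :
      R.Edge u v ω' → Path R v w ω n → Path R u w (ω' + ω) (n + 1)

/-- `ω` is the weight `wt(u ⇒ v)` of a shortest path from `u` to `v` in `QB(W)`. -/
def IsWt (u v : Module.End ℚ V) (ω : Module.Dual ℚ V) : Prop :=
  ∃ n, R.Path u v ω n ∧ ∀ (m : ℕ) (ω' : Module.Dual ℚ V), R.Path u v ω' m → n ≤ m

/-- The distance `d(u ⇒ v)` in the quantum Bruhat graph. -/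
noncomputable def qbDist (u v : Module.End ℚ V) : ℕ :=
  sInf {n | ∃ ω, R.Path u v ω n}

/-- The cone of nonnegative integral sums of positive coroots; `μ ≤ ν` in the
coroot lattice iff `ν - μ` lies in this cone. -/
def corootCone : AddSubmonoid (Module.Dual ℚ V) :=
  AddSubmonoid.closure {d | ∃ α ∈ R.pos, d = R.pairing α}

/-- The coroot lattice `ℤΦ^∨`. -/
def corootLattice : AddSubgroup (Module.Dual ℚ V) :=
  AddSubgroup.closure {d | ∃ α ∈ R.pos, d = R.pairing α}



/-! ### Auxiliary machinery for the proof -/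

/-- Coefficient sequence of the orbit of `β` under `s_α ∘ s_β` in the "basis" `(α, β)`,
where `c = ⟨α^∨,β⟩`, `d = ⟨β^∨,α⟩`. -/

def seqAB (c d : ℚ) : ℕ → ℚ × ℚ
  | 0 => (0, 1)
  | (k+1) => ((c*d - 1) * (seqAB c d k).1 + c * (seqAB c d k).2,
              -(d * (seqAB c d k).1 + (seqAB c d k).2))

lemma seq_b_rec (c d : ℚ) (k : ℕ) :
    (seqAB c d (k+2)).2 = (c*d - 2) * (seqAB c d (k+1)).2 - (seqAB c d k).2 := by
  simp only [seqAB]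
  ring

lemma seq_b_zero (c d : ℚ) : (seqAB c d 0).2 = 1 := rfl
lemma seq_b_one (c d : ℚ) : (seqAB c d 1).2 = -1 := by simp [seqAB]

lemma seq_caseA (c d : ℚ) (hτ : 2 ≤ c*d - 2) :
    ∀ k, (seqAB c d (k+1)).2 ≤ -1 ∧ (seqAB c d (k+1)).2 < (seqAB c d k).2 := by
  intro k
  induction k with
  | zero => rw [seq_b_one, seq_b_zero]; norm_num
  | succ k ih =>
    obtain ⟨h1, h2⟩ := ih
    have hr := seq_b_rec c d k
    constructor <;> nlinarith

lemma seq_caseA_inj (c d : ℚ) (hτ : 2 ≤ c*d - 2) :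
    Function.Injective (fun k => (seqAB c d k).2) :=
  (strictAnti_nat_of_succ_lt (fun n => (seq_caseA c d hτ n).2)).injective

lemma seq_caseB (c d : ℚ) (hτ : c*d - 2 ≤ -3) :
    ∀ k, 1 ≤ |(seqAB c d (k+1)).2| ∧ |(seqAB c d (k+1)).2| < |(seqAB c d (k+2)).2| := by
  intro k
  induction k with
  | zero =>
    rw [seq_b_one, seq_b_rec, seq_b_one, seq_b_zero]
    rw [abs_of_nonpos (by norm_num), abs_of_nonneg (by nlinarith)]
    norm_num; nlinarith
  | succ k ih =>
    obtain ⟨h1, h2⟩ := ih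
    refine ⟨by linarith, ?_⟩
    have hr := seq_b_rec c d (k+1)
    have habs : |(c*d-2) * (seqAB c d (k+2)).2| - |(seqAB c d (k+1)).2| ≤ |(seqAB c d (k+3)).2| := by
      calc |(c*d-2) * (seqAB c d (k+2)).2| - |(seqAB c d (k+1)).2|
          ≤ |(c*d-2) * (seqAB c d (k+2)).2 - (seqAB c d (k+1)).2| := abs_sub_abs_le_abs_sub _ _
        _ = |(seqAB c d (k+3)).2| := by rw [← hr]
    have hmul : |(c*d-2) * (seqAB c d (k+2)).2| = |c*d-2| * |(seqAB c d (k+2)).2| := abs_mul _ _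
    have h3 : 3 ≤ |c*d - 2| := by rw [abs_of_nonpos (by linarith)]; linarith
    nlinarith [abs_nonneg ((seqAB c d (k+2)).2)]

lemma seq_caseB_inj (c d : ℚ) (hτ : c*d - 2 ≤ -3) :
    Function.Injective (fun k => (seqAB c d (k+1)).2) := by
  have hmono : StrictMono (fun k => |(seqAB c d (k+1)).2|) :=
    strictMono_nat_of_lt_succ (fun n => (seq_caseB c d hτ n).2)
  intro k j h
  exact hmono.injective (by simp only [] at h ⊢; rw [h])

lemma seq_d_zero (c : ℚ) (k : ℕ) :
    seqAB c 0 k = ((-1:ℚ)^(k+1) * k * c, (-1:ℚ)^k) := by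
  induction k with
  | zero => simp [seqAB]
  | succ k ih =>
    simp only [seqAB, ih]
    refine Prod.ext ?_ ?_ <;> (simp only []; push_cast; ring)

lemma refl_apply (α x : V) : R.refl α x = x - R.pairing α x • α := by
  simp [refl]

lemma refl_invol {α : V} (hα : α ∈ R.Φ) (x : V) : R.refl α (R.refl α x) = x := by
  rw [refl_apply, refl_apply, map_sub, map_smul, R.pairing_self α hα, smul_eq_mul]
  module

lemma coeff_eq {α β : V} (hα0 : α ≠ 0) (hind : ∀ q : ℚ, β ≠ q • α) {a b a' b' : ℚ}
    (h : a • α + b • β = a' • α + b' • β) : a = a' ∧ b = b' := by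
  have hb : b = b' := by
    by_contra hb
    have h2 : (b - b') • β = (a' - a) • α := by
      linear_combination (norm := module) h
    have : β = ((b - b')⁻¹ * (a' - a)) • α := by
      rw [mul_smul, ← h2, smul_smul, inv_mul_cancel₀ (sub_ne_zero.mpr hb), one_smul]
    exact hind _ this
  refine ⟨?_, hb⟩
  subst hb
  have h3 : (a - a') • α = 0 := by linear_combination (norm := module) h
  rcases smul_eq_zero.mp h3 with h4 | h4
  · linarith [sub_eq_zero.mp (by exact_mod_cast h4)]
  · exact absurd h4 hα0

/-- Membership of the orbit vectors in Φ. -/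
lemma seq_mem {α β : V} (hα : α ∈ R.Φ) (hβ : β ∈ R.Φ) :
    ∀ k, (seqAB (R.pairing α β) (R.pairing β α) k).1 • α
        + (seqAB (R.pairing α β) (R.pairing β α) k).2 • β ∈ R.Φ := by
  set c := R.pairing α β with hc
  set d := R.pairing β α with hd
  intro k
  induction k with
  | zero => simpa [seqAB] using hβ
  | succ k ih =>
    set a := (seqAB c d k).1
    set b := (seqAB c d k).2
    have hpβ : R.pairing β (a • α + b • β) = a * d + b * 2 := by
      rw [map_add, map_smul, map_smul, R.pairing_self β hβ, ← hd, smul_eq_mul, smul_eq_mul]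
    have h1 := R.reflect_mem β hβ _ ih
    rw [hpβ] at h1
    have e1 : a • α + b • β - (a * d + b * 2) • β = a • α + (-(a*d + b)) • β := by module
    rw [e1] at h1
    have hpα : R.pairing α (a • α + (-(a*d + b)) • β) = a * 2 + (-(a*d+b)) * c := by
      rw [map_add, map_smul, map_smul, R.pairing_self α hα, ← hc, smul_eq_mul, smul_eq_mul]
    have h2 := R.reflect_mem α hα _ h1
    rw [hpα] at h2
    have e2 : a • α + (-(a*d + b)) • β - (a * 2 + (-(a*d+b)) * c) • α
        = ((c*d - 1) * a + c * b) • α + (-(d * a + b)) • β := by module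
    rw [e2] at h2
    simpa [seqAB] using h2

/-- no pair of independent roots has `cd ≥ 4` or `cd ≤ -1`. -/
lemma no_big {α β : V} (hα : α ∈ R.Φ) (hβ : β ∈ R.Φ) (hind : ∀ q : ℚ, β ≠ q • α)
    (h : 4 ≤ R.pairing α β * R.pairing β α ∨ R.pairing α β * R.pairing β α ≤ -1) : False := by
  set c := R.pairing α β
  set d := R.pairing β α
  have hα0 : α ≠ 0 := fun h0 => R.zero_not_mem (h0 ▸ hα)
  have hbinj : Function.Injective (fun k => (seqAB c d (k+1)).2) := by
    rcases h with h | h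
    · have := seq_caseA_inj c d (by linarith)
      intro k j hkj; exact Nat.succ_injective (this hkj)
    · exact seq_caseB_inj c d (by linarith)
  have hinj : Function.Injective
      (fun k => (seqAB c d (k+1)).1 • α + (seqAB c d (k+1)).2 • β) := by
    intro k j hkj
    exact hbinj (coeff_eq hα0 hind hkj).2
  exact (R.finite.not_infinite (Set.infinite_of_injective_forall_mem hinj
    (fun k => R.seq_mem hα hβ (k+1))))

lemma d_zero_c_zero {α β : V} (hα : α ∈ R.Φ) (hβ : β ∈ R.Φ) (hind : ∀ q : ℚ, β ≠ q • α)
    (hd : R.pairing β α = 0) : R.pairing α β = 0 := by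
  by_contra hc
  set c := R.pairing α β with hcdef
  have hα0 : α ≠ 0 := fun h0 => R.zero_not_mem (h0 ▸ hα)
  have hmem : ∀ k, (seqAB c 0 k).1 • α + (seqAB c 0 k).2 • β ∈ R.Φ := by
    intro k
    have := R.seq_mem hα hβ k
    rwa [hd, ← hcdef] at this
  have hinj : Function.Injective
      (fun k => (seqAB c 0 k).1 • α + (seqAB c 0 k).2 • β) := by
    intro k j hkj
    obtain ⟨ha, hb⟩ := coeff_eq hα0 hind hkj
    rw [seq_d_zero, seq_d_zero] at ha hb
    simp only [] at ha hb
    rw [pow_succ, pow_succ, hb] at ha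
    have hne : ((-1:ℚ))^j * -1 ≠ 0 := by
      apply mul_ne_zero (pow_ne_zero _ (by norm_num)) (by norm_num)
    have h5 : ((-1:ℚ)^j * -1) * ((k:ℚ) * c) = ((-1:ℚ)^j * -1) * ((j:ℚ) * c) := by
      linear_combination ha
    have h6 := mul_left_cancel₀ hne h5
    have h7 : (k:ℚ) = (j:ℚ) := mul_right_cancel₀ hc h6
    exact_mod_cast h7
  exact R.finite.not_infinite (Set.infinite_of_injective_forall_mem hinj hmem)

/-- main positivity: an inversion `β ≠ α` of `s_α` has `⟨α^∨, β⟩ ≥ 1`. -/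
lemma one_le_pairing {α β : V} (hα : α ∈ R.pos) (hβ : β ∈ R.pos) (hne : β ≠ α)
    (hrefl : R.refl α β ∉ R.pos) : 1 ≤ R.pairing α β := by
  have hαΦ : α ∈ R.Φ := R.pos_sub hα
  have hβΦ : β ∈ R.Φ := R.pos_sub hβ
  have hα0 : α ≠ 0 := fun h0 => R.zero_not_mem (h0 ▸ hαΦ)
  set c := R.pairing α β with hcdef
  set d := R.pairing β α with hddef
  have hind : ∀ q : ℚ, β ≠ q • α := by
    intro q hq
    have hqΦ : q • α ∈ R.Φ := hq ▸ hβΦ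
    rcases R.reduced α hαΦ q hqΦ with h1 | h1
    · rw [h1, one_smul] at hq; exact hne hq
    · rw [h1] at hq
      apply R.not_pos_and_neg α hα
      have : -α = β := by rw [hq]; module
      rwa [← this] at hβ
  obtain ⟨nc, hnc⟩ := R.pairing_int α hαΦ β hβΦ
  obtain ⟨nd, hnd⟩ := R.pairing_int β hβΦ α hαΦ
  rw [← hcdef] at hnc
  rw [← hddef] at hnd
  have hc0 : c ≠ 0 := by
    intro h0
    apply hrefl
    rw [refl_apply, ← hcdef, h0, zero_smul, sub_zero]
    exact hβ
  by_contra hge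
  push_neg at hge
  have hncle : nc ≤ -1 := by
    have h2 : (nc:ℚ) < 1 := by rw [← hnc]; exact hge
    have h1 : nc ≠ 0 := fun h => hc0 (by rw [hnc, h]; norm_num)
    have h3 : nc < 1 := by exact_mod_cast h2
    omega
  have hbound : ¬(4 ≤ c * d ∨ c * d ≤ -1) := fun h => R.no_big hαΦ hβΦ hind h
  push_neg at hbound
  obtain ⟨hcd3, hcd0⟩ := hbound
  have hcdint : c * d = ((nc * nd : ℤ) : ℚ) := by rw [hnc, hnd]; push_cast; ring
  have h5 : nc * nd ≤ 3 := by
    have h' : ((nc*nd:ℤ):ℚ) < 4 := by rw [← hcdint]; exact hcd3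
    have h'' : nc * nd < 4 := by exact_mod_cast h'
    omega
  have h0cd : 0 ≤ nc * nd := by
    have h' : (-1:ℚ) < ((nc*nd:ℤ):ℚ) := by rw [← hcdint]; exact hcd0
    have h'' : (-1:ℤ) < nc * nd := by exact_mod_cast h'
    omega
  have hdne : nd ≠ 0 := by
    intro h0'
    apply hc0
    have hd0 : R.pairing β α = 0 := by rw [← hddef, hnd, h0']; norm_num
    rw [hcdef]
    exact R.d_zero_c_zero hαΦ hβΦ hind hd0
  have hndle : nd ≤ -1 := by
    have : nd ≤ 0 := by nlinarith
    omega
  have hncge : -3 ≤ nc := by nlinarith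
  have hsumΦ : α + β ∈ R.Φ := by
    by_cases hc1 : nc = -1
    · have h' := R.reflect_mem α hαΦ β hβΦ
      rw [← hcdef, hnc, hc1] at h'
      have e : β - ((-1:ℤ) : ℚ) • α = α + β := by push_cast; module
      rwa [e] at h'
    · have hd1 : nd = -1 := by
        by_contra h'
        have h2 : nd ≤ -2 := by omega
        have h3 : nc ≤ -2 := by omega
        nlinarith [mul_nonneg (by omega : (0:ℤ) ≤ -nc-2) (by omega : (0:ℤ) ≤ -nd-2)]
      have h' := R.reflect_mem β hβΦ α hαΦ
      rw [← hddef, hnd, hd1] at h'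
      have e : α - ((-1:ℤ) : ℚ) • β = α + β := by push_cast; module
      rwa [e] at h'
  have hsumpos : α + β ∈ R.pos := R.pos_add α hα β hβ hsumΦ
  apply hrefl
  rw [refl_apply, ← hcdef]
  have hnc1 : nc = -1 ∨ nc = -2 ∨ nc = -3 := by omega
  rcases hnc1 with h | h | h
  · have e : β - c • α = α + β := by rw [hnc, h]; push_cast; module
    rw [e]; exact hsumpos
  · have hΦ2 : β - c • α ∈ R.Φ := by
      have h' := R.reflect_mem α hαΦ β hβΦ
      rwa [← hcdef] at h'
    have e : β - c • α = (α + β) + α := by rw [hnc, h]; push_cast; module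
    rw [e] at hΦ2 ⊢
    exact R.pos_add _ hsumpos _ hα hΦ2
  · have hp1 : R.pairing α (α + β) = -1 := by
      rw [map_add, R.pairing_self α hαΦ, ← hcdef, hnc, h]; norm_num
    have hΦ2 : β + (2:ℚ) • α ∈ R.Φ := by
      have h' := R.reflect_mem α hαΦ (α + β) hsumΦ
      rw [hp1] at h'
      have e : α + β - (-1 : ℚ) • α = β + (2:ℚ) • α := by module
      rwa [e] at h'
    have hpos2 : β + (2:ℚ) • α ∈ R.pos := by
      have e : β + (2:ℚ) • α = (α + β) + α := by module
      rw [e] at hΦ2 ⊢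
      exact R.pos_add _ hsumpos _ hα hΦ2
    have hΦ3 : β - c • α ∈ R.Φ := by
      have h' := R.reflect_mem α hαΦ β hβΦ
      rwa [← hcdef] at h'
    have e : β - c • α = (β + (2:ℚ) • α) + α := by rw [hnc, h]; push_cast; module
    rw [e] at hΦ3 ⊢
    exact R.pos_add _ hpos2 _ hα hΦ3

/-- `ℓ(s_α) = ⟨α^∨, 2ρ⟩ - 1` holds iff every positive root `β ≠ α` with
`s_α(β) ∈ Φ⁻` satisfies `⟨α^∨, β⟩ = 1`. -/
theorem length_reflection_eq_iff (α : V) (hα : α ∈ R.pos) :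
    (R.len (R.refl α) : ℚ) = R.pairing α R.twoRho - 1 ↔
      ∀ β ∈ R.pos, β ≠ α → R.refl α β ∉ R.pos → R.pairing α β = 1 := by
  classical
  have hαΦ : α ∈ R.Φ := R.pos_sub hα
  have hα0 : α ≠ 0 := fun h0 => R.zero_not_mem (h0 ▸ hαΦ)
  have hposfin : R.pos.Finite := R.finite.subset R.pos_sub
  set P : Finset V := hposfin.toFinset with hPdef
  have hP : (↑P : Set V) = R.pos := hposfin.coe_toFinset
  have h2ρ : R.pairing α R.twoRho = ∑ β ∈ P, R.pairing α β := by
    rw [twoRho, ← hP, finsum_mem_coe_finset, map_sum]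
  set Q : Finset V := P.filter (fun β => R.refl α β ∉ R.pos) with hQdef
  have hlen : R.len (R.refl α) = Q.card := by
    rw [len, ← Set.ncard_coe_finset]
    congr 1
    ext x
    simp [hQdef, hPdef, Set.Finite.mem_toFinset]
  have hsplit := Finset.sum_filter_add_sum_filter_not P
    (fun β => R.refl α β ∉ R.pos) (fun β => R.pairing α β)
  have hzero : ∑ β ∈ P.filter (fun β => ¬ R.refl α β ∉ R.pos), R.pairing α β = 0 := by
    apply Finset.sum_involution (fun β _ => R.refl α β)
    · intro β hβ
      rw [refl_apply, map_sub, map_smul, R.pairing_self α hαΦ, smul_eq_mul]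
      ring
    · intro β hβ hfβ hgβ
      apply hfβ
      have h1 : R.pairing α β • α = 0 := by
        have := hgβ
        rw [refl_apply, sub_eq_self] at this
        exact this
      rcases smul_eq_zero.mp h1 with h2 | h2
      · exact h2
      · exact absurd h2 hα0
    · intro β hβ
      obtain ⟨hβP, hβr⟩ := Finset.mem_filter.mp hβ
      rw [not_not] at hβr
      have hβpos : β ∈ R.pos := hposfin.mem_toFinset.mp hβP
      refine Finset.mem_filter.mpr ⟨hposfin.mem_toFinset.mpr hβr, ?_⟩
      rw [not_not, R.refl_invol hαΦ]
      exact hβpos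
    · intro β hβ
      obtain ⟨hβP, _⟩ := Finset.mem_filter.mp hβ
      exact R.refl_invol hαΦ β
  have hQα : α ∈ Q := by
    refine Finset.mem_filter.mpr ⟨hposfin.mem_toFinset.mpr hα, ?_⟩
    have h1 : R.refl α α = -α := by
      rw [refl_apply, R.pairing_self α hαΦ]; module
    rw [h1]
    exact R.not_pos_and_neg α hα
  set Q' : Finset V := Q.erase α with hQ'def
  have hQsum : ∑ β ∈ Q, R.pairing α β = 2 + ∑ β ∈ Q', R.pairing α β := by
    rw [← Finset.add_sum_erase Q _ hQα, R.pairing_self α hαΦ]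
  have hQcard : (Q.card : ℚ) = (Q'.card : ℚ) + 1 := by
    have := Finset.card_erase_add_one hQα
    exact_mod_cast this.symm
  have hQ'mem : ∀ β ∈ Q', β ∈ R.pos ∧ β ≠ α ∧ R.refl α β ∉ R.pos := by
    intro β hb
    obtain ⟨hne, hbQ⟩ := Finset.mem_erase.mp hb
    obtain ⟨hbP, hbr⟩ := Finset.mem_filter.mp hbQ
    exact ⟨hposfin.mem_toFinset.mp hbP, hne, hbr⟩
  rw [hlen, h2ρ, ← hsplit, hzero, add_zero, hQsum]
  constructor
  · intro h β hβpos hβne hβrefl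
    have hβQ' : β ∈ Q' := Finset.mem_erase.mpr
      ⟨hβne, Finset.mem_filter.mpr ⟨hposfin.mem_toFinset.mpr hβpos, hβrefl⟩⟩
    have hsum0 : ∑ γ ∈ Q', (R.pairing α γ - 1) = 0 := by
      rw [Finset.sum_sub_distrib, Finset.sum_const, nsmul_eq_mul, mul_one]
      rw [hQcard] at h
      linarith
    have hnn : ∀ γ ∈ Q', 0 ≤ R.pairing α γ - 1 := by
      intro γ hγ
      obtain ⟨h1, h2, h3⟩ := hQ'mem γ hγ
      have := R.one_le_pairing hα h1 h2 h3
      linarith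
    have := (Finset.sum_eq_zero_iff_of_nonneg hnn).mp hsum0 β hβQ'
    linarith
  · intro h
    have hsum1 : ∑ γ ∈ Q', R.pairing α γ = (Q'.card : ℚ) := by
      rw [Finset.sum_congr rfl (fun γ hγ => by
        obtain ⟨h1, h2, h3⟩ := hQ'mem γ hγ
        exact h γ h1 h2 h3)]
      rw [Finset.sum_const, nsmul_eq_mul, mul_one]
    rw [hsum1, hQcard]
    ring
end RootSystemData
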